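/- arXiv:1002.1604 — 2 statements merged into one kernel-verified Lean document; each statement's English description precedes it below -/
import Mathlib

section
/- For every natural number t ≥ 2 and every integer j, (1/(4π²)) ∫₀^{2π}∫₀^{2π} cos(jφ)·cos(tω)·(1 − cos 2ω) / (1 − 2 cos ω · cos φ + cos²φ) dω dφ = −(1/(4π)) ∫₀^{2π} cos(jφ)·[ (cos φ)^{t−2} − (cos φ)^{t} ] dφ. -/
/-!
For `|r| < 1`, the Poisson integral formula on the unit disc, applied to the harmonic function
`Re zⁿ`, gives `∫₀^{2π} cos (n ω) / (1 - 2 r cos ω + r²) dω = 2π rⁿ / (1 - r²)`, since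
`1 - 2 r cos ω + r² = |e^{iω} - r|²`. Expanding
`cos (t ω) (1 - cos 2ω) = cos (t ω) - (cos ((t + 2) ω) + cos ((t - 2) ω)) / 2`, the inner integral
at `r = cos φ` is `-π (r^{t-2} - r^t)`. This holds whenever `|cos φ| < 1`, i.e. for almost every `φ`.
-/

open Real MeasureTheory intervalIntegral

lemma norm_circleMap_zero_one_sub_sq (r θ : ℝ) :
    ‖circleMap 0 1 θ - r‖ ^ 2 = 1 - 2 * cos θ * r + r ^ 2 := by
  rw [← Complex.normSq_eq_norm_sq, Complex.normSq_apply]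
  simp only [circleMap, Complex.ofReal_one, one_mul, zero_add, Complex.sub_re,
    Complex.exp_ofReal_mul_I_re, Complex.ofReal_re, Complex.sub_im, Complex.exp_ofReal_mul_I_im,
    Complex.ofReal_im, sub_zero]
  nlinarith [sin_sq_add_cos_sq θ]

lemma re_circleMap_zero_one_pow (n : ℕ) (θ : ℝ) : (circleMap 0 1 θ ^ n).re = cos (n * θ) := by
  rw [circleMap_zero, Complex.ofReal_one, one_mul, ← Complex.exp_nat_mul, ← mul_assoc,
    ← Complex.ofReal_natCast, ← Complex.ofReal_mul, Complex.exp_ofReal_mul_I_re]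

lemma integral_cos_nat_mul_div_poisson {r : ℝ} (hr : |r| < 1) (n : ℕ) :
    ∫ θ in 0..2 * π, cos (n * θ) / (1 - 2 * cos θ * r + r ^ 2) = 2 * π * r ^ n / (1 - r ^ 2) := by
  have poisson := InnerProductSpace.HarmonicOnNhd.circleAverage_poissonKernel_smul
    (f := fun z : ℂ => (z ^ n).re) (c := 0) (R := 1) (w := r)
    (fun z _ => (analyticAt_id.pow n).harmonicAt_re) (by simpa using hr)
  have h : (2 * π)⁻¹ * ((1 - r ^ 2) *
      ∫ θ in 0..2 * π, cos (n * θ) / (1 - 2 * cos θ * r + r ^ 2)) = r ^ n := by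
    simpa [circleAverage_def, poissonKernel_def, norm_circleMap_zero_one_sub_sq,
      re_circleMap_zero_one_pow, ← Complex.ofReal_pow, ← intervalIntegral.integral_const_mul,
      mul_div_assoc, div_mul_eq_mul_div] using poisson
  have : 1 - r ^ 2 ≠ 0 := by nlinarith [abs_lt.mp hr]
  field_simp at h ⊢
  linarith

lemma one_sub_two_mul_cos_mul_add_sq_pos {r : ℝ} (hr : |r| < 1) (θ : ℝ) :
    0 < 1 - 2 * cos θ * r + r ^ 2 := by
  have hcr : cos θ * r ≤ |r| := (le_abs_self _).trans (by
    rw [abs_mul]; exact mul_le_of_le_one_left (abs_nonneg r) (abs_cos_le_one θ))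
  nlinarith [abs_nonneg r, sq_abs r]

lemma intervalIntegrable_cos_nat_mul_div_poisson {r : ℝ} (hr : |r| < 1) (n : ℕ) (a b : ℝ) :
    IntervalIntegrable (fun θ => cos (n * θ) / (1 - 2 * cos θ * r + r ^ 2)) volume a b :=
  (by fun_prop : Continuous fun θ => cos (n * θ)).div (by fun_prop)
    (fun θ => (one_sub_two_mul_cos_mul_add_sq_pos hr θ).ne') |>.intervalIntegrable a b

lemma cos_mul_one_sub_cos_two_mul (x y : ℝ) :
    cos x * (1 - cos (2 * y)) = cos x - (cos (x + 2 * y) + cos (x - 2 * y)) / 2 := by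
  rw [cos_add, cos_sub]; ring

lemma integral_cos_mul_one_sub_cos_two_mul_div_poisson {r : ℝ} (hr : |r| < 1) {t : ℕ}
    (ht : 2 ≤ t) :
    ∫ ω in 0..2 * π, cos (t * ω) * (1 - cos (2 * ω)) / (1 - 2 * cos ω * r + r ^ 2)
      = -π * (r ^ (t - 2) - r ^ t) := by
  obtain ⟨s, rfl⟩ := Nat.exists_eq_add_of_le' ht
  have hint := intervalIntegrable_cos_nat_mul_div_poisson hr (a := 0) (b := 2 * π)
  have expand : ∀ ω, cos ((s + 2 : ℕ) * ω) * (1 - cos (2 * ω)) / (1 - 2 * cos ω * r + r ^ 2)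
      = cos ((s + 2 : ℕ) * ω) / (1 - 2 * cos ω * r + r ^ 2)
        - (cos ((s + 4 : ℕ) * ω) / (1 - 2 * cos ω * r + r ^ 2)
          + cos (s * ω) / (1 - 2 * cos ω * r + r ^ 2)) / 2 := by
    intro ω
    rw [cos_mul_one_sub_cos_two_mul]
    push_cast
    ring_nf
  simp_rw [expand]
  rw [integral_sub (hint _) (((hint _).add (hint _)).div_const 2),
    intervalIntegral.integral_div, integral_add (hint _) (hint _)]
  simp only [integral_cos_nat_mul_div_poisson hr, Nat.add_sub_cancel]
  have : 1 - r ^ 2 ≠ 0 := by nlinarith [abs_lt.mp hr]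
  field_simp
  ring

lemma ae_abs_cos_lt_one : ∀ᵐ φ ∂(volume : Measure ℝ), |cos φ| < 1 := by
  refine ae_iff.2 <| measure_mono_null (t := Set.range fun n : ℤ => n * π) ?_
    ((Set.countable_range _).measure_zero _)
  intro φ hφ
  have hsin : sin φ = 0 := by
    have : 1 ≤ |cos φ| := not_lt.mp hφ
    nlinarith [sin_sq_add_cos_sq φ, abs_cos_le_one φ, sq_abs (cos φ)]
  exact sin_eq_zero_iff.mp hsin

theorem stmt_4 (t : ℕ) (ht : 2 ≤ t) (j : ℤ) :
    (1 / (4 * π ^ 2)) * ∫ φ in (0:ℝ)..(2 * π), ∫ ω in (0:ℝ)..(2 * π),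
        Real.cos (j * φ) * Real.cos (t * ω) * (1 - Real.cos (2 * ω)) /
          (1 - 2 * Real.cos ω * Real.cos φ + (Real.cos φ) ^ 2)
    = -(1 / (4 * π)) * ∫ φ in (0:ℝ)..(2 * π),
        Real.cos (j * φ) * ((Real.cos φ) ^ (t - 2) - (Real.cos φ) ^ t) := by
  have inner : ∀ᵐ φ ∂volume, φ ∈ Set.uIoc 0 (2 * π) →
      ∫ ω in (0:ℝ)..(2 * π), cos (j * φ) * cos (t * ω) * (1 - cos (2 * ω)) /
          (1 - 2 * cos ω * cos φ + cos φ ^ 2)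
        = -π * (cos (j * φ) * (cos φ ^ (t - 2) - cos φ ^ t)) := by
    filter_upwards [ae_abs_cos_lt_one] with φ hφ _
    simp only [mul_assoc (cos (j * φ)), mul_div_assoc (cos (j * φ))]
    rw [intervalIntegral.integral_const_mul,
      integral_cos_mul_one_sub_cos_two_mul_div_poisson hφ ht]
    ring
  rw [integral_congr_ae inner, intervalIntegral.integral_const_mul]
  field_simp
end

section
/- For every real number a with |a| < 1 and every real number b, (1/(2π)) ∫₀^{2π} (1 − cos(b + ω)) / (1 − 2a·cos ω + a²) dω = (1 − a·cos b) / (1 − a²). -/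
/-!
The integrand is `(1 - a²)⁻¹` times the Poisson kernel of the unit disc at the point `a`,
`(1 - a²) / |e^{iω} - a|²`, multiplied by the boundary values `1 - cos (b + ω)` of the harmonic
function `u z = Re (1 - e^{ib} z)`. The Poisson integral formula turns the average into
`u a = 1 - a cos b`.
-/

open Real

theorem norm_sq_circleMap_sub_ofReal (a θ : ℝ) :
    ‖circleMap 0 1 θ - a‖ ^ 2 = 1 - 2 * a * Real.cos θ + a ^ 2 := by
  rw [← Complex.normSq_eq_norm_sq, Complex.normSq_apply]
  simp only [Complex.sub_re, Complex.sub_im, circleMap_zero_re, circleMap_zero_im,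
    Complex.ofReal_re, Complex.ofReal_im]
  nlinarith [Real.sin_sq_add_cos_sq θ]

theorem poissonKernel_circleMap_ofReal (a θ : ℝ) :
    poissonKernel 0 a (circleMap 0 1 θ) = (1 - a ^ 2) / (1 - 2 * a * Real.cos θ + a ^ 2) := by
  simp [poissonKernel_def, norm_sq_circleMap_sub_ofReal]

theorem InnerProductSpace.HarmonicOnNhd.poisson_integral_ofReal {f : ℂ → ℝ}
    (hf : HarmonicOnNhd f (Metric.closedBall 0 1)) {a : ℝ} (ha : |a| < 1) :
    (1 / (2 * π)) * ∫ θ in (0:ℝ)..(2 * π),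
      (1 - a ^ 2) / (1 - 2 * a * Real.cos θ + a ^ 2) * f (circleMap 0 1 θ) = f a := by
  have h := hf.circleAverage_poissonKernel_smul (w := a) (by simpa using ha)
  rw [Real.circleAverage_def] at h
  simpa [poissonKernel_circleMap_ofReal] using h

theorem stmt_18 (a : ℝ) (ha : |a| < 1) (b : ℝ) :
    (1 / (2 * π)) * ∫ ω in (0:ℝ)..(2 * π),
        (1 - Real.cos (b + ω)) / (1 - 2 * a * Real.cos ω + a ^ 2)
    = (1 - a * Real.cos b) / (1 - a ^ 2) := by
  set u : ℂ → ℝ := fun z ↦ (1 - Complex.exp (b * Complex.I) * z).re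
  have hu : InnerProductSpace.HarmonicOnNhd u (Metric.closedBall 0 1) := fun _ _ ↦
    AnalyticAt.harmonicAt_re (by fun_prop)
  have hu_circle (θ : ℝ) : u (circleMap 0 1 θ) = 1 - Real.cos (b + θ) := by
    simp [u, circleMap_zero, Complex.exp_ofReal_mul_I_re, Real.cos_add]
  have hu_a : u a = 1 - a * Real.cos b := by
    simp only [u, Complex.sub_re, Complex.one_re, Complex.re_mul_ofReal,
      Complex.exp_ofReal_mul_I_re]
    ring
  have h1a : 1 - a ^ 2 ≠ 0 := by
    nlinarith [sq_abs a, abs_nonneg a]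
  have h := hu.poisson_integral_ofReal ha
  simp only [hu_circle, hu_a, div_mul_eq_mul_div, mul_div_assoc,
    intervalIntegral.integral_const_mul] at h
  rw [eq_div_iff h1a, ← h]
  ring
end
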